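/- Let Γ be a group generated by a finite symmetric set S. If for every s ∈ S the function n ↦ |Cl(s) ∩ B_n| is bounded by a polynomial in n, then Γ/Z(Γ) has polynomial growth. -/

import Mathlib

def wordBall {Γ : Type*} [Group Γ] (S : Set Γ) (n : ℕ) : Set Γ :=
  {g | ∃ l : List Γ, l.length ≤ n ∧ (∀ x ∈ l, x ∈ S) ∧ l.prod = g}

noncomputable def wlen {Γ : Type*} [Group Γ] (S : Set Γ) (g : Γ) : ℕ :=
  sInf {n | g ∈ wordBall S n}

def conjClass {Γ : Type*} [Group Γ] (h : Γ) : Set Γ := {y | ∃ g : Γ, g⁻¹ * h * g = y}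

noncomputable def cosetLen {Γ : Type*} [Group Γ] (S : Set Γ) (C : Subgroup Γ)
    (x : Γ ⧸ C) : ℕ :=
  sInf {n | ∃ g : Γ, (QuotientGroup.mk g : Γ ⧸ C) = x ∧ wlen S g ≤ n}

def schreierBall {Γ : Type*} [Group Γ] (S : Set Γ) (C : Subgroup Γ) (n : ℕ) :
    Set (Γ ⧸ C) := {x | cosetLen S C x ≤ n}

/-- A function `f : ℕ → ℕ` is polynomially bounded. -/
def PolyBnd (f : ℕ → ℕ) : Prop := ∃ C d : ℕ, ∀ n, f n ≤ C * (n + 1) ^ d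

/-!
Conjugating the generators by `g` records the coset `g Z(Γ)`: two elements inducing the same
conjugates of every generator differ by an element commuting with all generators, i.e. a
central one. A coset of length at most `n` has a representative `g ∈ B_n`, and then
`g⁻¹ s g ∈ Cl(s) ∩ B_{2n+1}`, so the ball of radius `n` in `Γ/Z(Γ)` injects into
`∏_{s ∈ S} Cl(s) ∩ B_{2n+1}`, whose size is polynomial in `n`.
-/

namespace PolyBnd

theorem mono {f g : ℕ → ℕ} (hg : PolyBnd g) (hfg : ∀ n, f n ≤ g n) : PolyBnd f := by
  obtain ⟨C, d, h⟩ := hg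
  exact ⟨C, d, fun n => (hfg n).trans (h n)⟩

theorem one : PolyBnd fun _ => 1 :=
  ⟨1, 0, fun _ => by simp⟩

theorem mul {f g : ℕ → ℕ} (hf : PolyBnd f) (hg : PolyBnd g) : PolyBnd fun n => f n * g n := by
  obtain ⟨C, d, hC⟩ := hf
  obtain ⟨D, e, hD⟩ := hg
  refine ⟨C * D, d + e, fun n => ?_⟩
  calc f n * g n ≤ C * (n + 1) ^ d * (D * (n + 1) ^ e) := Nat.mul_le_mul (hC n) (hD n)
    _ = C * D * (n + 1) ^ (d + e) := by ring

theorem prod {ι : Type*} (s : Finset ι) {f : ι → ℕ → ℕ} (hf : ∀ i ∈ s, PolyBnd (f i)) :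
    PolyBnd fun n => ∏ i ∈ s, f i n := by
  classical
  induction s using Finset.induction_on with
  | empty => simpa using one
  | insert i s hi ih =>
    simp only [Finset.prod_insert hi]
    exact (hf i (s.mem_insert_self i)).mul (ih fun j hj => hf j (Finset.mem_insert_of_mem hj))

theorem comp_affine {f : ℕ → ℕ} (hf : PolyBnd f) (a b : ℕ) : PolyBnd fun n => f (a * n + b) := by
  obtain ⟨C, d, h⟩ := hf
  refine ⟨C * (a + b + 1) ^ d, d, fun n => ?_⟩
  have hlin : a * n + b + 1 ≤ (a + b + 1) * (n + 1) := by nlinarith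
  calc f (a * n + b) ≤ C * (a * n + b + 1) ^ d := h _
    _ ≤ C * ((a + b + 1) * (n + 1)) ^ d := by gcongr
    _ = C * (a + b + 1) ^ d * (n + 1) ^ d := by rw [mul_pow, mul_assoc]

end PolyBnd

theorem Set.ncard_univ_pi {ι : Type*} [Fintype ι] {α : ι → Type*} (A : ∀ i, Set (α i)) :
    (Set.univ.pi A).ncard = ∏ i, (A i).ncard := by
  rw [← Nat.card_coe_set_eq, Nat.card_congr (Equiv.Set.univPi A), Nat.card_pi]
  simp only [Nat.card_coe_set_eq]

section WordBall

variable {Γ : Type*} [Group Γ] {S : Set Γ}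

theorem wordBall_mono {m n : ℕ} (h : m ≤ n) : wordBall S m ⊆ wordBall S n := by
  rintro g ⟨l, hl, hS, rfl⟩
  exact ⟨l, hl.trans h, hS, rfl⟩

theorem mem_wordBall_one {s : Γ} (hs : s ∈ S) : s ∈ wordBall S 1 :=
  ⟨[s], by simp, by simpa using hs, by simp⟩

theorem mul_mem_wordBall {m n : ℕ} {g h : Γ} (hg : g ∈ wordBall S m) (hh : h ∈ wordBall S n) :
    g * h ∈ wordBall S (m + n) := by
  obtain ⟨l₁, hl₁, hS₁, rfl⟩ := hg
  obtain ⟨l₂, hl₂, hS₂, rfl⟩ := hh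
  refine ⟨l₁ ++ l₂, by simpa using Nat.add_le_add hl₁ hl₂, fun x hx => ?_, List.prod_append⟩
  rcases List.mem_append.mp hx with hx | hx
  exacts [hS₁ x hx, hS₂ x hx]

theorem inv_mem_wordBall (hsym : S⁻¹ = S) {n : ℕ} {g : Γ} (hg : g ∈ wordBall S n) :
    g⁻¹ ∈ wordBall S n := by
  obtain ⟨l, hl, hS, rfl⟩ := hg
  refine ⟨(l.map (·⁻¹)).reverse, by simpa using hl, ?_, (List.prod_inv_reverse l).symm⟩
  simp only [List.mem_reverse, List.mem_map]
  rintro _ ⟨y, hy, rfl⟩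
  rw [← hsym]
  exact Set.inv_mem_inv.mpr (hS y hy)

theorem conj_mem_wordBall (hsym : S⁻¹ = S) {n : ℕ} {g s : Γ} (hg : g ∈ wordBall S n)
    (hs : s ∈ S) : g⁻¹ * s * g ∈ wordBall S (2 * n + 1) := by
  have h := mul_mem_wordBall (mul_mem_wordBall (inv_mem_wordBall hsym hg) (mem_wordBall_one hs)) hg
  exact wordBall_mono (by omega) h

theorem wordBall_finite (S : Finset Γ) (n : ℕ) : (wordBall (S : Set Γ) n).Finite := by
  induction n with
  | zero =>
    refine (Set.finite_singleton 1).subset ?_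
    rintro _ ⟨l, hl, -, rfl⟩
    simp [List.length_eq_zero_iff.mp (Nat.le_zero.mp hl)]
  | succ n ih =>
    refine ((S.finite_toSet.biUnion fun s _ => ih.image (s * ·)).insert 1).subset ?_
    rintro _ ⟨_ | ⟨s, l⟩, hl, hS, rfl⟩
    · simp
    · refine Or.inr (Set.mem_biUnion (hS s (by simp)) ⟨l.prod, ⟨l, ?_, ?_, rfl⟩, by simp⟩)
      · simpa using hl
      · exact fun x hx => hS x (by simp [hx])

theorem mem_wordBall_wlen (hsym : S⁻¹ = S) (hgen : Subgroup.closure S = ⊤) (g : Γ) :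
    g ∈ wordBall S (wlen S g) := by
  have hg : g ∈ Submonoid.closure S := by
    have h : g ∈ (Subgroup.closure S).toSubmonoid := hgen ▸ Subgroup.mem_top g
    rwa [Subgroup.closure_toSubmonoid, hsym, Set.union_self] at h
  obtain ⟨l, hS, rfl⟩ := Submonoid.exists_list_of_mem_closure hg
  exact Nat.sInf_mem (s := {n | l.prod ∈ wordBall S n}) ⟨l.length, l, le_rfl, hS, rfl⟩

theorem exists_mem_wordBall_of_mem_schreierBall (hsym : S⁻¹ = S)
    (hgen : Subgroup.closure S = ⊤) {C : Subgroup Γ} {n : ℕ} {x : Γ ⧸ C}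
    (hx : x ∈ schreierBall S C n) : ∃ g ∈ wordBall S n, (g : Γ ⧸ C) = x := by
  obtain ⟨g, hgx, hg⟩ : ∃ g : Γ, (g : Γ ⧸ C) = x ∧ wlen S g ≤ cosetLen S C x := by
    obtain ⟨g, rfl⟩ := QuotientGroup.mk_surjective x
    exact Nat.sInf_mem (s := {n | ∃ g' : Γ, (g' : Γ ⧸ C) = g ∧ wlen S g' ≤ n})
      ⟨wlen S g, g, rfl, le_rfl⟩
  exact ⟨g, wordBall_mono (hg.trans hx) (mem_wordBall_wlen hsym hgen g), hgx⟩

end WordBall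

theorem QuotientGroup.mk_center_eq_of_conj_eq {Γ : Type*} [Group Γ] {S : Set Γ}
    (hgen : Subgroup.closure S = ⊤) {g h : Γ} (hconj : ∀ s ∈ S, g⁻¹ * s * g = h⁻¹ * s * h) :
    (g : Γ ⧸ Subgroup.center Γ) = h := by
  rw [QuotientGroup.eq_iff_div_mem, div_eq_mul_inv]
  suffices Subgroup.centralizer {g * h⁻¹} = ⊤ by
    rwa [Subgroup.centralizer_eq_top_iff_subset, Set.singleton_subset_iff] at this
  rw [eq_top_iff, ← hgen, Subgroup.closure_le]
  intro s hs
  rw [SetLike.mem_coe, Subgroup.mem_centralizer_singleton_iff]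
  calc s * (g * h⁻¹) = g * (g⁻¹ * s * g) * h⁻¹ := by group
    _ = g * (h⁻¹ * s * h) * h⁻¹ := by rw [hconj s hs]
    _ = g * h⁻¹ * s := by group

theorem ncard_schreierBall_center_le {Γ : Type*} [Group Γ] (S : Finset Γ)
    (hsym : (S : Set Γ)⁻¹ = S) (hgen : Subgroup.closure (S : Set Γ) = ⊤) (n : ℕ) :
    (schreierBall (S : Set Γ) (Subgroup.center Γ) n).ncard ≤
      ∏ s : S, (conjClass (s : Γ) ∩ wordBall (S : Set Γ) (2 * n + 1)).ncard := by
  choose! rep hrep_mem hrep_mk using fun x (hx : x ∈ schreierBall (S : Set Γ) _ n) =>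
    exists_mem_wordBall_of_mem_schreierBall hsym hgen hx
  rw [← Set.ncard_univ_pi]
  refine Set.ncard_le_ncard_of_injOn (fun x (s : S) => (rep x)⁻¹ * s * rep x) ?_ ?_
    (Set.Finite.pi fun _ => (wordBall_finite S _).inter_of_right _)
  · intro x hx s _
    exact ⟨⟨rep x, rfl⟩, conj_mem_wordBall hsym (hrep_mem x hx) s.2⟩
  · intro x hx y hy hxy
    rw [← hrep_mk x hx, ← hrep_mk y hy]
    exact QuotientGroup.mk_center_eq_of_conj_eq hgen fun s hs => congrFun hxy ⟨s, hs⟩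

/-- If every generator has a conjugacy class of polynomially bounded growth, then
the quotient of `Γ` by its center has polynomial growth. -/
theorem stmt5 (Γ : Type*) [Group Γ] (S : Finset Γ) (hsym : (S : Set Γ)⁻¹ = (S : Set Γ))
    (hgen : Subgroup.closure (S : Set Γ) = ⊤)
    (hcl : ∀ s ∈ S, PolyBnd (fun n => (conjClass s ∩ wordBall (S : Set Γ) n).ncard)) :
    PolyBnd (fun n => (schreierBall (S : Set Γ) (Subgroup.center Γ) n).ncard) :=
  (PolyBnd.prod Finset.univ fun (s : S) _ => (hcl s s.2).comp_affine 2 1).mono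
    (ncard_schreierBall_center_le S hsym hgen)
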